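/- Let V be a finite-dimensional complex vector space and A, B alternating bilinear forms on V. A subspace U ⊆ V is bi-Lagrangian with respect to the pencil {A + λB} if and only if U is bi-isotropic, admissible, and maximal with respect to inclusion among bi-isotropic admissible subspaces of V. -/

import Mathlib

open Module LinearMap

variable {V : Type*} [AddCommGroup V] [Module ℂ V]

/-- The skew-orthogonal complement of a subspace `U` with respect to a
bilinear form `C`. -/
noncomputable def orthComp (C : V →ₗ[ℂ] V →ₗ[ℂ] ℂ) (U : Submodule ℂ V) : Submodule ℂ V :=
  ⨅ u ∈ U, LinearMap.ker (C u)

/-- The rank of a bilinear form: the rank of the induced map `V → V*`. -/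
noncomputable def formRank (C : V →ₗ[ℂ] V →ₗ[ℂ] ℂ) : ℕ :=
  Module.finrank ℂ (LinearMap.range C)

/-- The member of the pencil `{A + λB : λ ∈ ℂ ∪ {∞}}` at `λ`; `none` is `λ = ∞`. -/
noncomputable def pencilForm (A B : V →ₗ[ℂ] V →ₗ[ℂ] ℂ) : Option ℂ → V →ₗ[ℂ] V →ₗ[ℂ] ℂ
  | none => B
  | some l => A + l • B

/-- The rank of the pencil: `max_{λ ∈ ℂ ∪ {∞}} rank (A + λB)`. -/
noncomputable def pencilRank (A B : V →ₗ[ℂ] V →ₗ[ℂ] ℂ) : ℕ :=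
  ⨆ l : Option ℂ, formRank (pencilForm A B l)

/-- A subspace `U` is bi-isotropic if both `A` and `B` vanish on `U × U`. -/
def biIsotropic (A B : V →ₗ[ℂ] V →ₗ[ℂ] ℂ) (U : Submodule ℂ V) : Prop :=
  ∀ u ∈ U, ∀ v ∈ U, A u v = 0 ∧ B u v = 0

/-- A subspace `U` is admissible if its skew-orthogonal complements w.r.t.
`A + λB` coincide for all but finitely many `λ ∈ ℂ`. -/
def IsAdmissible (A B : V →ₗ[ℂ] V →ₗ[ℂ] ℂ) (U : Submodule ℂ V) : Prop :=
  ∃ W : Submodule ℂ V, {l : ℂ | orthComp (A + l • B) U ≠ W}.Finite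

/-!
Off a finite set of `λ`, the form `A + λB` has the maximal rank `r`: on a complement `S` of the
kernel of a member of maximal rank, the restricted pencil is nondegenerate at one parameter, so
its degenerate members correspond to eigenvalues of a fixed endomorphism of `S`.

For any form `C` and subspace `U`, `dim U + dim U^⊥ = dim V + dim (U ∩ ker C)`. Hence an isotropic
`U` has `2 dim U + rk C ≤ 2 dim V`, so a bi-Lagrangian `U` is maximal, and it equals its generic
complement `U^⊥` (so it is admissible). Conversely, let `W` be the generic complement of an
admissible bi-isotropic `U`. Two generic values of `λ` give `W ⊆ U^{⊥A} ∩ U^{⊥B}`. If `W = U`,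
equality holds in the dimension count since `ker C ⊆ U^⊥ = U`. Otherwise, over `ℂ` some member
`aA + bB` of the pencil restricted to a complement of `U` in `W` is degenerate, and adding a vector
of its kernel to `U` gives a larger bi-isotropic admissible subspace.
-/

open LinearMap (BilinForm)

section PencilOfLinearMaps

variable {K M N : Type*} [Field K] [AddCommGroup M] [Module K M] [AddCommGroup N] [Module K N]
  [FiniteDimensional K M] [FiniteDimensional K N]

theorem LinearMap.finite_setOf_not_injective_add_smul {F : M →ₗ[K] N} (G : M →ₗ[K] N)
    (hF : Function.Injective F) (hdim : finrank K M = finrank K N) :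
    {t : K | ¬ Function.Injective (F + t • G)}.Finite := by
  let e := F.linearEquivOfInjective hF hdim
  let T : Module.End K M := e.symm.toLinearMap ∘ₗ G
  -- `F x + t • G x = 0` says that `x` is an eigenvector of `F⁻¹ G` for the eigenvalue `-t⁻¹`
  refine (T.finite_hasEigenvalue.preimage (f := fun t : K => -t⁻¹) ?_).subset ?_
  · intro s _ t _ h
    simpa using h
  · intro t ht
    obtain ⟨x, hFG, hx⟩ : ∃ x, F x + t • G x = 0 ∧ x ≠ 0 := by
      simpa [injective_iff_map_eq_zero] using ht
    have ht0 : t ≠ 0 := by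
      rintro rfl
      exact hx (hF (by simpa using hFG))
    have hTx : x + t • T x = 0 := by
      refine e.injective ?_
      rwa [map_add, map_smul, map_zero, LinearMap.comp_apply, LinearEquiv.coe_coe,
        LinearEquiv.apply_symm_apply]
    refine Module.End.hasEigenvalue_of_hasEigenvector ⟨Module.End.mem_eigenspace_iff.mpr ?_, hx⟩
    rw [← inv_smul_smul₀ ht0 (T x), eq_neg_of_add_eq_zero_right hTx, smul_neg, neg_smul]

theorem LinearMap.exists_smul_add_smul_apply_eq_zero [IsAlgClosed K] [Nontrivial M]
    (F G : M →ₗ[K] N) (hdim : finrank K M = finrank K N) :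
    ∃ a b : K, (a, b) ≠ 0 ∧ ∃ x ≠ 0, a • F x + b • G x = 0 := by
  by_cases hG : Function.Injective G
  · let e := G.linearEquivOfInjective hG hdim
    obtain ⟨μ, hμ⟩ := Module.End.exists_eigenvalue (e.symm.toLinearMap ∘ₗ F)
    obtain ⟨x, hx⟩ := hμ.exists_hasEigenvector
    have hFx : F x = μ • G x := by
      simpa [e] using congrArg e (Module.End.mem_eigenspace_iff.mp hx.1)
    exact ⟨1, -μ, by simp, x, hx.2, by simp [hFx]⟩
  · obtain ⟨x, hGx, hx⟩ : ∃ x, G x = 0 ∧ x ≠ 0 := by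
      simpa [injective_iff_map_eq_zero] using hG
    exact ⟨0, 1, by simp, x, hx, by simp [hGx]⟩

end PencilOfLinearMaps

section OrthComp

variable (C : V →ₗ[ℂ] V →ₗ[ℂ] ℂ) (U : Submodule ℂ V)

theorem mem_orthComp {x : V} : x ∈ orthComp C U ↔ ∀ u ∈ U, C u x = 0 := by
  simp [orthComp]

theorem orthComp_eq_orthogonal : orthComp C U = LinearMap.BilinForm.orthogonal C U := by
  ext x
  rw [mem_orthComp, LinearMap.BilinForm.mem_orthogonal_iff]

theorem ker_le_orthComp {C : V →ₗ[ℂ] V →ₗ[ℂ] ℂ} (hC : C.IsAlt) : ker C ≤ orthComp C U :=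
  fun x hx => (mem_orthComp C U).mpr fun u _ => hC.eq_iff.mpr (by simp [mem_ker.mp hx])

theorem orthComp_sup_span_singleton (v : V) :
    orthComp C (U ⊔ Submodule.span ℂ {v}) = orthComp C U ⊓ ker (C v) := by
  ext x
  simp only [Submodule.mem_inf, mem_orthComp, mem_ker, Submodule.mem_sup,
    Submodule.mem_span_singleton]
  constructor
  · intro h
    exact ⟨fun u hu => h u ⟨u, hu, 0, ⟨0, zero_smul ℂ v⟩, add_zero u⟩,
      h v ⟨0, U.zero_mem, v, ⟨1, one_smul ℂ v⟩, zero_add v⟩⟩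
  · rintro ⟨hU, hv⟩ _ ⟨u, hu, _, ⟨t, rfl⟩, rfl⟩
    simp [hU u hu, hv]

variable [FiniteDimensional ℂ V]

theorem finrank_add_finrank_orthComp :
    finrank ℂ U + finrank ℂ (orthComp C U) = finrank ℂ V + finrank ℂ ↥(U ⊓ ker C) := by
  rw [orthComp_eq_orthogonal]
  exact LinearMap.BilinForm.finrank_add_finrank_orthogonal' U

theorem formRank_add_finrank_ker : formRank C + finrank ℂ (ker C) = finrank ℂ V :=
  finrank_range_add_finrank_ker C

theorem finrank_add_finrank_orthComp_add_formRank_le :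
    finrank ℂ U + finrank ℂ (orthComp C U) + formRank C ≤ 2 * finrank ℂ V := by
  have := Submodule.finrank_mono (inf_le_right : U ⊓ ker C ≤ ker C)
  have := finrank_add_finrank_orthComp C U
  have := formRank_add_finrank_ker C
  omega

theorem finrank_add_finrank_orthComp_add_formRank_of_ker_le (h : ker C ≤ U) :
    finrank ℂ U + finrank ℂ (orthComp C U) + formRank C = 2 * finrank ℂ V := by
  have hsum := finrank_add_finrank_orthComp C U
  rw [inf_eq_right.mpr h] at hsum
  have := formRank_add_finrank_ker C
  omega

end OrthComp

section Pencil

variable {A B : V →ₗ[ℂ] V →ₗ[ℂ] ℂ} {U : Submodule ℂ V}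

theorem isAlt_pencilForm (hA : A.IsAlt) (hB : B.IsAlt) : ∀ c, (pencilForm A B c).IsAlt
  | none => hB
  | some l => fun x => by simp [pencilForm, hA x, hB x]

theorem pencilForm_restrict (S : Submodule ℂ V) (c : Option ℂ) :
    pencilForm (BilinForm.restrict A S) (BilinForm.restrict B S) c =
      BilinForm.restrict (pencilForm A B c) S := by
  cases c <;> rfl

theorem biIsotropic.le_orthComp_pencilForm (hU : biIsotropic A B U) (c : Option ℂ) :
    U ≤ orthComp (pencilForm A B c) U := fun x hx => (mem_orthComp _ U).mpr fun u hu => by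
  cases c <;> simp [pencilForm, hU u hu x hx]

theorem biIsotropic.le_orthComp_add_smul (hU : biIsotropic A B U) (l : ℂ) :
    U ≤ orthComp (A + l • B) U :=
  hU.le_orthComp_pencilForm (some l)

theorem injective_restrict_of_isCompl_ker {C : V →ₗ[ℂ] V →ₗ[ℂ] ℂ} (hC : C.IsAlt)
    {S : Submodule ℂ V} (hS : IsCompl S (ker C)) :
    Function.Injective (BilinForm.restrict C S) := by
  refine (injective_iff_map_eq_zero _).mpr fun x hx => ?_
  have hxS : ∀ s ∈ S, C x s = 0 := fun s hs => by simpa using congrArg (· ⟨s, hs⟩) hx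
  -- `C x` also vanishes on `ker C` by alternation, hence on `S ⊔ ker C = ⊤`
  have hxker : (x : V) ∈ ker C := by
    refine mem_ker.mpr (LinearMap.ext fun y => ?_)
    obtain ⟨s, hs, k, hk, rfl⟩ :=
      Submodule.mem_sup.mp (hS.sup_eq_top.symm ▸ Submodule.mem_top (x := y))
    have hxk : C x k = 0 := hC.eq_iff.mp (by simp [mem_ker.mp hk])
    simp [hxS s hs, hxk]
  exact Subtype.ext (Submodule.disjoint_def.mp hS.disjoint x x.2 hxker)

variable [FiniteDimensional ℂ V]

theorem formRank_le_finrank (C : V →ₗ[ℂ] V →ₗ[ℂ] ℂ) : formRank C ≤ finrank ℂ V :=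
  finrank_range_le C

variable (A B) in
theorem bddAbove_range_formRank_pencilForm :
    BddAbove (Set.range fun c => formRank (pencilForm A B c)) :=
  ⟨finrank ℂ V, by rintro _ ⟨c, rfl⟩; exact formRank_le_finrank _⟩

variable (A B) in
theorem formRank_pencilForm_le_pencilRank (c : Option ℂ) :
    formRank (pencilForm A B c) ≤ pencilRank A B :=
  le_ciSup (bddAbove_range_formRank_pencilForm A B) c

variable (A B) in
theorem exists_formRank_pencilForm_eq_pencilRank :
    ∃ c, formRank (pencilForm A B c) = pencilRank A B :=
  Nat.sSup_mem (Set.range_nonempty _) (bddAbove_range_formRank_pencilForm A B)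

theorem biIsotropic.two_mul_finrank_add_pencilRank_le (hU : biIsotropic A B U) :
    2 * finrank ℂ U + pencilRank A B ≤ 2 * finrank ℂ V := by
  obtain ⟨c, hc⟩ := exists_formRank_pencilForm_eq_pencilRank A B
  have := finrank_add_finrank_orthComp_add_formRank_le (pencilForm A B c) U
  have := Submodule.finrank_mono (hU.le_orthComp_pencilForm c)
  omega

theorem finrank_le_formRank_of_injective_restrict {C : V →ₗ[ℂ] V →ₗ[ℂ] ℂ}
    {S : Submodule ℂ V} (h : Function.Injective (BilinForm.restrict C S)) :
    finrank ℂ S ≤ formRank C := by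
  have hinj : Function.Injective (C ∘ₗ S.subtype) := fun x y hxy =>
    h (LinearMap.ext fun z => by simpa using congrArg (· z) hxy)
  calc finrank ℂ S = finrank ℂ (range (C ∘ₗ S.subtype)) := (finrank_range_of_inj hinj).symm
    _ ≤ formRank C := Submodule.finrank_mono (range_comp_le_range _ _)

theorem finite_setOf_not_injective_add_smul_of_injective_pencilForm {c : Option ℂ}
    (hc : Function.Injective (pencilForm A B c)) :
    {l : ℂ | ¬ Function.Injective (A + l • B)}.Finite := by
  have hdim : finrank ℂ V = finrank ℂ (Module.Dual ℂ V) := Subspace.dual_finrank_eq.symm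
  cases c with
  | none =>
    replace hc : Function.Injective B := hc
    refine (((finite_setOf_not_injective_add_smul A hc hdim).preimage
      inv_injective.injOn).insert 0).subset fun l hl => ?_
    by_cases hl0 : l = 0
    · exact Or.inl hl0
    refine Or.inr fun hinj => hl fun x y hxy => hinj ?_
    have hpencil : A + l • B = l • (B + l⁻¹ • A) := by
      rw [smul_add, smul_smul, mul_inv_cancel₀ hl0, one_smul, add_comm]
    rw [hpencil] at hxy
    exact smul_right_injective _ hl0 (by simpa using hxy)
  | some μ =>
    replace hc : Function.Injective (A + μ • B) := hc
    refine ((finite_setOf_not_injective_add_smul B hc hdim).preimage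
      (sub_left_injective (b := μ)).injOn).subset fun l hl => ?_
    have hpencil : A + l • B = A + μ • B + (l - μ) • B := by module
    simpa [hpencil] using hl

theorem finite_setOf_formRank_ne_pencilRank (hA : A.IsAlt) (hB : B.IsAlt) :
    {l : ℂ | formRank (A + l • B) ≠ pencilRank A B}.Finite := by
  obtain ⟨c, hc⟩ := exists_formRank_pencilForm_eq_pencilRank A B
  obtain ⟨S, hS⟩ := (ker (pencilForm A B c)).exists_isCompl
  have hSdim : finrank ℂ S = pencilRank A B := by
    have := Submodule.finrank_add_eq_of_isCompl hS
    have := formRank_add_finrank_ker (pencilForm A B c)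
    omega
  have hSinj :
      Function.Injective (pencilForm (BilinForm.restrict A S) (BilinForm.restrict B S) c) := by
    rw [pencilForm_restrict]
    exact injective_restrict_of_isCompl_ker (isAlt_pencilForm hA hB c) hS.symm
  -- a member of the pencil that is nondegenerate on `S` has rank at least `dim S = r`
  refine (finite_setOf_not_injective_add_smul_of_injective_pencilForm hSinj).subset
    fun l hl hinj => hl (le_antisymm (formRank_pencilForm_le_pencilRank A B (some l)) ?_)
  exact hSdim ▸ finrank_le_formRank_of_injective_restrict (pencilForm_restrict S (some l) ▸ hinj)

end Pencil

section Admissible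

variable {A B : V →ₗ[ℂ] V →ₗ[ℂ] ℂ} {U W : Submodule ℂ V}

theorem orthComp_inf_orthComp_le {l₁ l₂ : ℂ} (h : l₁ ≠ l₂) :
    orthComp (A + l₁ • B) U ⊓ orthComp (A + l₂ • B) U ≤ orthComp A U ⊓ orthComp B U := by
  intro x hx
  obtain ⟨hx₁, hx₂⟩ := Submodule.mem_inf.mp hx
  rw [mem_orthComp] at hx₁ hx₂
  have hxB : ∀ u ∈ U, B u x = 0 := fun u hu => by
    have h₁ : A u x + l₁ * B u x = 0 := by simpa using hx₁ u hu
    have h₂ : A u x + l₂ * B u x = 0 := by simpa using hx₂ u hu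
    exact (mul_eq_zero.mp (by linear_combination h₁ - h₂ : (l₁ - l₂) * B u x = 0)).resolve_left
      (sub_ne_zero.mpr h)
  refine Submodule.mem_inf.mpr ⟨(mem_orthComp A U).mpr fun u hu => ?_, (mem_orthComp B U).mpr hxB⟩
  simpa [hxB u hu] using hx₁ u hu

theorem biIsotropic.sup_span_singleton (hA : A.IsAlt) (hB : B.IsAlt) (hU : biIsotropic A B U)
    {v : V} (hv : v ∈ orthComp A U ⊓ orthComp B U) :
    biIsotropic A B (U ⊔ Submodule.span ℂ {v}) := by
  obtain ⟨hvA, hvB⟩ := Submodule.mem_inf.mp hv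
  rw [mem_orthComp] at hvA hvB
  intro _ hxv _ hyv
  obtain ⟨x, hx, _, hsv, rfl⟩ := Submodule.mem_sup.mp hxv
  obtain ⟨y, hy, _, htv, rfl⟩ := Submodule.mem_sup.mp hyv
  obtain ⟨s, rfl⟩ := Submodule.mem_span_singleton.mp hsv
  obtain ⟨t, rfl⟩ := Submodule.mem_span_singleton.mp htv
  have hvyA : A v y = 0 := hA.eq_iff.mp (hvA y hy)
  have hvyB : B v y = 0 := hB.eq_iff.mp (hvB y hy)
  simp [hU x hx y hy, hvA x hx, hvB x hx, hvyA, hvyB, hA.self_eq_zero, hB.self_eq_zero]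

theorem exists_mem_notMem_smul_add_smul_eq_zero [FiniteDimensional ℂ V] (hA : A.IsAlt)
    (hB : B.IsAlt) (hUW : U < W) (hW : W ≤ orthComp A U ⊓ orthComp B U) :
    ∃ v ∈ W, v ∉ U ∧ ∃ a b : ℂ, (a, b) ≠ 0 ∧ ∀ z ∈ W, a * A v z + b * B v z = 0 := by
  obtain ⟨Q, hUQ, hUQW⟩ := IsModularLattice.exists_disjoint_and_sup_eq hUW.le
  have : Nontrivial Q := Submodule.nontrivial_iff_ne_bot.mpr fun hQ =>
    hUW.ne (by simpa [hQ] using hUQW)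
  obtain ⟨a, b, hab, x, hx, hrel⟩ := exists_smul_add_smul_apply_eq_zero
    (BilinForm.restrict A Q) (BilinForm.restrict B Q) Subspace.dual_finrank_eq.symm
  have hxW : (x : V) ∈ W := hUQW ▸ Submodule.mem_sup_right x.2
  obtain ⟨hxA, hxB⟩ := Submodule.mem_inf.mp (hW hxW)
  rw [mem_orthComp] at hxA hxB
  refine ⟨x, hxW, fun hxU => hx (Subtype.ext (Submodule.disjoint_def.mp hUQ x hxU x.2)),
    a, b, hab, fun z hz => ?_⟩
  -- on `Q` this is the degeneracy of `a • A + b • B`, on `U` both forms vanish since `x ∈ W`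
  obtain ⟨u, hu, q, hq, rfl⟩ := Submodule.mem_sup.mp (hUQW ▸ hz)
  have hxq : a * A x q + b * B x q = 0 := by simpa using congrArg (· ⟨q, hq⟩) hrel
  simp only [map_add, hA.eq_iff.mp (hxA u hu), hB.eq_iff.mp (hxB u hu)]
  linear_combination hxq

theorem isAdmissible_sup_span_singleton {v : V} {a b : ℂ} (hab : (a, b) ≠ 0)
    (hW : {l : ℂ | orthComp (A + l • B) U ≠ W}.Finite)
    (hv : ∀ z ∈ W, a * A v z + b * B v z = 0) : IsAdmissible A B (U ⊔ Submodule.span ℂ {v}) := by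
  have hlin : {l : ℂ | b = l * a}.Subsingleton := by
    intro l₁ h₁ l₂ h₂
    have ha : a ≠ 0 := fun ha => hab (by simp_all)
    exact mul_right_cancel₀ ha (h₁.symm.trans h₂)
  refine ⟨W ⊓ ker (A v) ⊓ ker (B v), (hW.union hlin.finite).subset fun l hl => ?_⟩
  by_contra hgood
  simp only [Set.mem_union, Set.mem_ofPred_eq, not_or, not_not] at hgood
  obtain ⟨hlW, hlab⟩ := hgood
  apply hl
  rw [orthComp_sup_span_singleton, hlW]
  ext z
  simp only [Submodule.mem_inf, mem_ker]
  constructor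
  · rintro ⟨hz, hzl⟩
    -- `(A + l • B) v` and `a • A v + b • B v` vanish at `z`, and `b - l * a ≠ 0`
    have hAz : A v z + l * B v z = 0 := by simpa using hzl
    have hBz : B v z = 0 := (mul_eq_zero.mp
      (by linear_combination hv z hz - a * hAz : (b - l * a) * B v z = 0)).resolve_left
      (sub_ne_zero.mpr hlab)
    exact ⟨⟨hz, by simpa [hBz] using hAz⟩, hBz⟩
  · rintro ⟨⟨hz, hAz⟩, hBz⟩
    exact ⟨hz, by simp [hAz, hBz]⟩

end Admissible

section BiLagrangian

variable [FiniteDimensional ℂ V] {A B : V →ₗ[ℂ] V →ₗ[ℂ] ℂ} {U : Submodule ℂ V}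

theorem orthComp_eq_self_of_two_mul_finrank_add_pencilRank_eq (hU : biIsotropic A B U)
    (hdim : 2 * finrank ℂ U + pencilRank A B = 2 * finrank ℂ V) {l : ℂ}
    (hl : formRank (A + l • B) = pencilRank A B) : orthComp (A + l • B) U = U := by
  have := finrank_add_finrank_orthComp_add_formRank_le (A + l • B) U
  exact (Submodule.eq_of_le_of_finrank_le (hU.le_orthComp_add_smul l) (by omega)).symm

theorem two_mul_finrank_add_pencilRank_eq_of_orthComp_eq_self (hA : A.IsAlt) (hB : B.IsAlt)
    {l : ℂ} (hl : formRank (A + l • B) = pencilRank A B) (hU : orthComp (A + l • B) U = U) :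
    2 * finrank ℂ U + pencilRank A B = 2 * finrank ℂ V := by
  have hker := hU ▸ ker_le_orthComp U (isAlt_pencilForm hA hB (some l))
  have := finrank_add_finrank_orthComp_add_formRank_of_ker_le (A + l • B) U hker
  rw [hU] at this
  omega

end BiLagrangian

/-- A subspace `U` is bi-Lagrangian w.r.t. the pencil
`{A + λB}` (bi-isotropic and `dim U = dim V − (1/2)·rk 𝓛`, encoded as
`2·dim U + rk 𝓛 = 2·dim V`) if and only if `U` is bi-isotropic, admissible,
and maximal with respect to inclusion among bi-isotropic admissible
subspaces. -/
theorem statement_6 [FiniteDimensional ℂ V]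
    (A B : V →ₗ[ℂ] V →ₗ[ℂ] ℂ) (hAalt : A.IsAlt) (hBalt : B.IsAlt)
    (U : Submodule ℂ V) :
    (biIsotropic A B U ∧ 2 * finrank ℂ U + pencilRank A B = 2 * finrank ℂ V) ↔
      (biIsotropic A B U ∧ IsAdmissible A B U ∧
        ∀ U' : Submodule ℂ V, biIsotropic A B U' → IsAdmissible A B U' →
          U ≤ U' → U' = U) := by
  have hgeneric := finite_setOf_formRank_ne_pencilRank hAalt hBalt
  constructor
  · rintro ⟨hU, hdim⟩
    refine ⟨hU, ⟨U, hgeneric.subset fun l hl hrank =>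
      hl (orthComp_eq_self_of_two_mul_finrank_add_pencilRank_eq hU hdim hrank)⟩, ?_⟩
    intro U' hU' _ hUU'
    have := hU'.two_mul_finrank_add_pencilRank_le
    exact (Submodule.eq_of_le_of_finrank_le hUU' (by omega)).symm
  · rintro ⟨hU, ⟨W, hW⟩, hmax⟩
    obtain ⟨l₁, hl₁, l₂, hl₂, hne⟩ := (hW.union hgeneric).infinite_compl.nontrivial
    simp only [Set.mem_compl_iff, Set.mem_union, Set.mem_ofPred_eq, not_or, not_not] at hl₁ hl₂
    obtain ⟨hW₁, hrank₁⟩ := hl₁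
    have hWU : W ≤ orthComp A U ⊓ orthComp B U := by
      simpa [hW₁, hl₂.1] using orthComp_inf_orthComp_le (A := A) (B := B) (U := U) hne
    obtain rfl | hUW := (hW₁ ▸ hU.le_orthComp_add_smul l₁).eq_or_lt
    · exact ⟨hU, two_mul_finrank_add_pencilRank_eq_of_orthComp_eq_self hAalt hBalt hrank₁ hW₁⟩
    · obtain ⟨v, hvW, hvU, a, b, hab, hv⟩ :=
        exists_mem_notMem_smul_add_smul_eq_zero hAalt hBalt hUW hWU
      have hUv := hmax _ (hU.sup_span_singleton hAalt hBalt (hWU hvW))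
        (isAdmissible_sup_span_singleton hab hW hv) le_sup_left
      exact absurd (hUv ▸ Submodule.mem_sup_right (Submodule.mem_span_singleton_self v)) hvU
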